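/- Let A : ℝ^d → ℝ be convex differentiable with L_p-Lipschitz p-th derivatives (p ≥ 2), minimizer x^*, and let M ≥ L_p. Then for T iterations of the Tensor Extragradient Method started at x^0, min_{t < T} ‖∇A(x^{t+1/2})‖ ≤ (p^p M^p / (p!(pM − L_p)^{p/2}(pM + L_p)^{p/2−1})) · ‖x^0 − x^*‖^p / T^{p/2}. -/

import Mathlib

open Finset

/-- The `p`-th order Taylor polynomial of `A` at `z`, evaluated at `x`. -/
noncomputable def taylorApprox {d : ℕ} (p : ℕ) (A : EuclideanSpace ℝ (Fin d) → ℝ)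
    (z x : EuclideanSpace ℝ (Fin d)) : ℝ :=
  ∑ i ∈ Finset.range (p + 1),
    (1 / (Nat.factorial i : ℝ)) * iteratedFDeriv ℝ i A z (fun _ => x - z)

/-!
First-order optimality of `xhalf t` for the regularised Taylor model says that the Taylor
expansion of `∇A` at `x t` equals `-c • (xhalf t - x t)`, where `c⁻¹` is the extragradient step
size. With `r = ‖xhalf t - x t‖`, the Lipschitz bound on the `p`-th derivative then gives both
`‖∇A (xhalf t)‖ ≤ (pM + L)/p! · r^p` and `‖x (t+1) - xhalf t‖ ≤ L/(pM) · r`. Since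
`⟪∇A (xhalf t), xhalf t - xs⟫ ≥ 0` by convexity, the distance to `xs` decreases:
`‖x (t+1) - xs‖² ≤ ‖x t - xs‖² - (1 - (L/(pM))²) r²`. Telescoping bounds the smallest `r²` by
`‖x 0 - xs‖² / ((1 - (L/(pM))²) T)`, and the gradient bound turns this into the rate.
-/

open Set
open scoped Nat InnerProductSpace

section Snoc

variable {E F : Type*} [NormedAddCommGroup E] [NormedSpace ℝ E]
  [NormedAddCommGroup F] [NormedSpace ℝ F]

theorem iteratedFDeriv_succ_apply_snoc {n : ℕ} (f : E → F) (x : E) (m : Fin n → E) (a : E) :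
    iteratedFDeriv ℝ (n + 1) f x (Fin.snoc m a) = iteratedFDeriv ℝ n (fderiv ℝ f) x m a := by
  rw [iteratedFDeriv_succ_apply_right, Fin.init_snoc, Fin.snoc_last]

-- The last two slots are those of `fderiv ℝ (fderiv ℝ f)`, which is symmetric at every point,
-- and the flip of these two slots commutes with `iteratedFDeriv ℝ n`.
theorem iteratedFDeriv_snoc_snoc_comm {n : ℕ} {f : E → F} (hf : ContDiff ℝ (n + 2) f)
    (x : E) (m : Fin n → E) (a b : E) :
    iteratedFDeriv ℝ (n + 2) f x (Fin.snoc (Fin.snoc m a) b) =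
      iteratedFDeriv ℝ (n + 2) f x (Fin.snoc (Fin.snoc m b) a) := by
  let flip : (E →L[ℝ] E →L[ℝ] F) →L[ℝ] E →L[ℝ] E →L[ℝ] F :=
    (ContinuousLinearMap.flipₗᵢ ℝ E E F).toLinearIsometry.toContinuousLinearMap
  have hflip : flip ∘ fderiv ℝ (fderiv ℝ f) = fderiv ℝ (fderiv ℝ f) := by
    funext y
    ext a b
    exact (hf.contDiffAt.isSymmSndFDerivAt (by simp)).eq b a
  have hcomp := flip.iteratedFDeriv_comp_left (G := E →L[ℝ] E →L[ℝ] F)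
    ((hf.fderiv_right (m := n + 1) le_rfl).fderiv_right (m := n) le_rfl).contDiffAt (x := x) le_rfl
  rw [hflip] at hcomp
  simp only [iteratedFDeriv_succ_apply_snoc]
  conv_lhs => rw [hcomp]
  rfl

end Snoc

section SymmetricDerivative

universe u

-- One universe for `E` and `F`, so that the induction can replace `f` by `fderiv ℝ f`.
variable {E F : Type u} [NormedAddCommGroup E] [NormedSpace ℝ E]
  [NormedAddCommGroup F] [NormedSpace ℝ F]

theorem iteratedFDeriv_update_const_eq_snoc {n : ℕ} {f : E → F} (hf : ContDiff ℝ (n + 1) f)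
    (x v w : E) (k : Fin (n + 1)) :
    iteratedFDeriv ℝ (n + 1) f x (Function.update (fun _ ↦ v) k w) =
      iteratedFDeriv ℝ (n + 1) f x (Fin.snoc (fun _ ↦ v) w) := by
  induction n generalizing F f with
  | zero =>
    congr 1
    ext i
    fin_cases i; fin_cases k
    rfl
  | succ n ih =>
    induction k using Fin.lastCases with
    | last =>
      congr 1
      ext i
      induction i using Fin.lastCases <;> simp
    | cast k =>
      have hupdate : Function.update (fun _ ↦ v) k.castSucc w =
          Fin.snoc (Function.update (fun _ ↦ v) k w) v := by
        ext i
        induction i using Fin.lastCases <;>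
          simp [Function.update_apply, (Fin.castSucc_lt_last k).ne']
      have hconst : (Fin.snoc (fun _ ↦ v) v : Fin (n + 1) → E) = fun _ ↦ v := by
        ext i
        induction i using Fin.lastCases <;> simp
      rw [hupdate, iteratedFDeriv_succ_apply_snoc, ih (hf.fderiv_right le_rfl),
        ← iteratedFDeriv_succ_apply_snoc, iteratedFDeriv_snoc_snoc_comm hf, hconst]

theorem hasFDerivAt_iteratedFDeriv_apply_sub_const {n : ℕ} {f : E → F}
    (hf : ContDiff ℝ (n + 1) f) (z y : E) :
    HasFDerivAt (fun y ↦ iteratedFDeriv ℝ (n + 1) f z (fun _ ↦ y - z))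
      ((n + 1 : ℝ) • iteratedFDeriv ℝ n (fderiv ℝ f) z (fun _ ↦ y - z)) y := by
  classical
  convert HasFDerivAt.multilinear_comp (f := iteratedFDeriv ℝ (n + 1) f z)
    (fun _ ↦ hasFDerivAt_sub_const (x := y) z) using 1
  ext w
  simp [iteratedFDeriv_update_const_eq_snoc hf, iteratedFDeriv_succ_apply_snoc,
    ← Nat.cast_smul_eq_nsmul ℝ]

end SymmetricDerivative

section Taylor

variable {E F : Type*} [NormedAddCommGroup E] [NormedSpace ℝ E]
  [NormedAddCommGroup F] [NormedSpace ℝ F]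

theorem norm_iteratedFDeriv_fderiv_sub (f : E → F) (n : ℕ) (x y : E) :
    ‖iteratedFDeriv ℝ n (fderiv ℝ f) x - iteratedFDeriv ℝ n (fderiv ℝ f) y‖ =
      ‖iteratedFDeriv ℝ (n + 1) f x - iteratedFDeriv ℝ (n + 1) f y‖ := by
  simp only [iteratedFDeriv_succ_eq_comp_right, Function.comp_apply]
  rw [← LinearIsometryEquiv.map_sub, LinearIsometryEquiv.norm_map]

theorem integral_one_sub_pow_mul (n : ℕ) :
    ∫ t in (0 : ℝ)..1, (1 - t) ^ n * t = 1 / ((n + 1) * (n + 2)) := by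
  have hsymm := intervalIntegral.integral_comp_sub_left (fun s : ℝ ↦ s ^ n * (1 - s))
    (a := 0) (b := 1) 1
  simp only [sub_sub_cancel, sub_self, sub_zero] at hsymm
  rw [hsymm]
  simp only [mul_sub, mul_one, ← pow_succ]
  rw [intervalIntegral.integral_sub (by simp) (by simp)]
  simp only [integral_pow]
  field_simp
  push_cast
  ring

theorem map_add_sub_taylor_eq_integral [CompleteSpace F] {n : ℕ} {f : E → F}
    (hf : ContDiff ℝ (n + 1) f) (x y : E) :
    f (x + y) - ∑ k ∈ range (n + 2), (k ! : ℝ)⁻¹ • iteratedFDeriv ℝ k f x (fun _ ↦ y) =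
      (n ! : ℝ)⁻¹ • ∫ t in (0 : ℝ)..1, (1 - t) ^ n •
        (iteratedFDeriv ℝ (n + 1) f (x + t • y) - iteratedFDeriv ℝ (n + 1) f x) (fun _ ↦ y) := by
  have hlast : ((n + 1)! : ℝ)⁻¹ • iteratedFDeriv ℝ (n + 1) f x (fun _ ↦ y) =
      (n ! : ℝ)⁻¹ • ∫ t in (0 : ℝ)..1, (1 - t) ^ n • iteratedFDeriv ℝ (n + 1) f x (fun _ ↦ y) := by
    rw [intervalIntegral.integral_smul_const, smul_smul,
      intervalIntegral.integral_comp_sub_left (fun s ↦ s ^ n)]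
    simp [Nat.factorial_succ]
  simp only [sub_apply, smul_sub]
  rw [intervalIntegral.integral_sub ((by fun_prop : Continuous _).intervalIntegrable _ _)
      ((by fun_prop : Continuous _).intervalIntegrable _ _), smul_sub, ← hlast,
    sum_range_succ _ (n + 1),
    map_add_eq_sum_add_integral_iteratedFDeriv (fun _ _ ↦ hf.contDiffAt)]
  abel

theorem norm_sub_taylor_le_of_lipschitz [CompleteSpace F] {n : ℕ} {f : E → F} {L : ℝ}
    (hf : ContDiff ℝ (n + 1) f)
    (hLip : ∀ x y, ‖iteratedFDeriv ℝ (n + 1) f x - iteratedFDeriv ℝ (n + 1) f y‖ ≤ L * ‖x - y‖)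
    (x y : E) :
    ‖f (x + y) - ∑ k ∈ range (n + 2), (k ! : ℝ)⁻¹ • iteratedFDeriv ℝ k f x (fun _ ↦ y)‖ ≤
      L * ‖y‖ ^ (n + 2) / (n + 2)! := by
  have hintegrand : ∀ t ∈ Set.Ioc (0 : ℝ) 1,
      ‖(1 - t) ^ n • (iteratedFDeriv ℝ (n + 1) f (x + t • y) - iteratedFDeriv ℝ (n + 1) f x)
        (fun _ ↦ y)‖ ≤ (1 - t) ^ n * t * (L * ‖y‖ ^ (n + 2)) := by
    rintro t ⟨ht₀, ht₁⟩
    have hmul := ContinuousMultilinearMap.le_opNorm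
      (iteratedFDeriv ℝ (n + 1) f (x + t • y) - iteratedFDeriv ℝ (n + 1) f x) (fun _ ↦ y)
    have hlip := hLip (x + t • y) x
    simp only [prod_const, Finset.card_fin, add_sub_cancel_left, norm_smul,
      Real.norm_of_nonneg ht₀.le] at hmul hlip
    rw [norm_smul, Real.norm_of_nonneg (pow_nonneg (by linarith) _)]
    calc (1 - t) ^ n * ‖_‖ ≤ (1 - t) ^ n * (L * (t * ‖y‖) * ‖y‖ ^ (n + 1)) := by
          refine mul_le_mul_of_nonneg_left (hmul.trans ?_) (pow_nonneg (by linarith) _)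
          gcongr
      _ = _ := by ring
  have hbound : ∫ t in (0 : ℝ)..1, (1 - t) ^ n * t * (L * ‖y‖ ^ (n + 2)) =
      L * ‖y‖ ^ (n + 2) / ((n + 1) * (n + 2)) := by
    rw [intervalIntegral.integral_mul_const, integral_one_sub_pow_mul]
    ring
  rw [map_add_sub_taylor_eq_integral hf, norm_smul, Real.norm_of_nonneg (by positivity)]
  calc (n ! : ℝ)⁻¹ * ‖∫ t in (0 : ℝ)..1, (1 - t) ^ n •
        (iteratedFDeriv ℝ (n + 1) f (x + t • y) - iteratedFDeriv ℝ (n + 1) f x) (fun _ ↦ y)‖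
      ≤ (n ! : ℝ)⁻¹ * ∫ t in (0 : ℝ)..1, (1 - t) ^ n * t * (L * ‖y‖ ^ (n + 2)) := by
        gcongr
        exact intervalIntegral.norm_integral_le_of_norm_le zero_le_one
          (Filter.Eventually.of_forall hintegrand)
          ((by fun_prop : Continuous _).intervalIntegrable _ _)
    _ = L * ‖y‖ ^ (n + 2) / (n + 2)! := by
        rw [hbound, Nat.factorial_succ, Nat.factorial_succ]
        push_cast
        field_simp
        ring

end Taylor

theorem ConvexOn.add_fderiv_sub_le {E : Type*} [NormedAddCommGroup E] [NormedSpace ℝ E]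
    {f : E → ℝ} {f' : E →L[ℝ] ℝ} {a : E}
    (hf : ConvexOn ℝ univ f) (hfa : HasFDerivAt f f' a) (b : E) : f a + f' (b - a) ≤ f b := by
  have hline : ConvexOn ℝ univ (f ∘ AffineMap.lineMap (k := ℝ) a b) :=
    (hf.comp_affineMap (AffineMap.lineMap (k := ℝ) a b)).subset (subset_univ _) convex_univ
  have hderiv : HasDerivAt (f ∘ AffineMap.lineMap (k := ℝ) a b) (f' (b - a)) 0 := by
    have := AffineMap.hasDerivAt_lineMap (a := a) (b := b) (x := (0 : ℝ))
    simpa using hfa.comp_hasDerivAt_of_eq (0 : ℝ) this (by simp)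
  have := hline.le_slope_of_hasDerivAt (mem_univ 0) (mem_univ 1) zero_lt_one hderiv
  simp only [map_sub, slope_def_field, Function.comp_apply, AffineMap.lineMap_apply_one,
    AffineMap.lineMap_apply_zero, sub_zero, div_one] at this
  rw [map_sub]
  linarith

section InnerProduct

variable {E : Type*} [NormedAddCommGroup E] [InnerProductSpace ℝ E]

theorem ConvexOn.inner_gradient_sub_nonneg [CompleteSpace E] {f : E → ℝ} {y z : E}
    (hf : ConvexOn ℝ univ f) (hfy : DifferentiableAt ℝ f y) (hz : IsMinOn f univ z) :
    0 ≤ ⟪gradient f y, y - z⟫_ℝ := by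
  have htangent := hf.add_fderiv_sub_le hfy.hasGradientAt.hasFDerivAt z
  rw [InnerProductSpace.toDual_apply_apply, ← neg_sub, inner_neg_right] at htangent
  linarith [isMinOn_univ_iff.mp hz y]

theorem hasFDerivAt_norm_sub_pow (n : ℕ) (x y : E) :
    HasFDerivAt (fun y ↦ ‖y - x‖ ^ (n + 2))
      (((n + 2 : ℝ) * ‖y - x‖ ^ n) • innerSL ℝ (y - x)) y := by
  have hrpow : ∀ y : E, ‖y - x‖ ^ (n + 2) = ‖y - x‖ ^ ((n : ℝ) + 2) := fun y ↦ by norm_cast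
  have h := (hasFDerivAt_norm_rpow (y - x) (p := n + 2) (by norm_cast; omega)).comp y
    (hasFDerivAt_sub_const x)
  rw [add_sub_cancel_right, Real.rpow_natCast, ContinuousLinearMap.comp_id] at h
  simpa only [hrpow, Function.comp_def] using h

theorem norm_sub_sq_le_of_inner_nonneg {x x' y z : E} {θ : ℝ} (hx' : ‖x' - y‖ ≤ θ * ‖y - x‖)
    (hxz : 0 ≤ ⟪x - x', y - z⟫_ℝ) :
    ‖x' - z‖ ^ 2 ≤ ‖x - z‖ ^ 2 - (1 - θ ^ 2) * ‖y - x‖ ^ 2 := by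
  have hid : ‖x' - z‖ ^ 2 = ‖x - z‖ ^ 2 - ‖y - x‖ ^ 2 + ‖x' - y‖ ^ 2 - 2 * ⟪x - x', y - z⟫_ℝ := by
    have hinner : ⟪x - z, x - x'⟫_ℝ - ⟪x - y, x - x'⟫_ℝ = ⟪x - x', y - z⟫_ℝ := by
      rw [← inner_sub_left, real_inner_comm, sub_sub_sub_cancel_left]
    rw [show x' - z = (x - z) - (x - x') by abel, show x' - y = (x - y) - (x - x') by abel,
      norm_sub_sq_real (x - z), norm_sub_sq_real (x - y), norm_sub_rev x y, ← hinner]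
    ring
  have hsq : ‖x' - y‖ ^ 2 ≤ θ ^ 2 * ‖y - x‖ ^ 2 := by
    simpa [mul_pow] using pow_le_pow_left₀ (norm_nonneg _) hx' 2
  linarith

end InnerProduct

section TensorStep

variable {d p : ℕ} {A : EuclideanSpace ℝ (Fin d) → ℝ} {L M : ℝ}
  {x y : EuclideanSpace ℝ (Fin d)}

noncomputable def regularizedTaylorModel (p : ℕ) (M : ℝ) (A : EuclideanSpace ℝ (Fin d) → ℝ)
    (x y : EuclideanSpace ℝ (Fin d)) : ℝ :=
  taylorApprox p A x y + (p : ℝ) * M / ((p + 1)! : ℝ) * ‖y - x‖ ^ (p + 1)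

theorem hasFDerivAt_taylorApprox (hA : ContDiff ℝ p A) (z y : EuclideanSpace ℝ (Fin d)) :
    HasFDerivAt (taylorApprox p A z)
      (∑ j ∈ range p, (j ! : ℝ)⁻¹ • iteratedFDeriv ℝ j (fderiv ℝ A) z (fun _ ↦ y - z)) y := by
  have hterm : ∀ j ∈ range p,
      HasFDerivAt (fun y ↦ 1 / ((j + 1)! : ℝ) * iteratedFDeriv ℝ (j + 1) A z (fun _ ↦ y - z))
        ((j ! : ℝ)⁻¹ • iteratedFDeriv ℝ j (fderiv ℝ A) z (fun _ ↦ y - z)) y := by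
    intro j hj
    have hAj : ContDiff ℝ (j + 1) A := hA.of_le (by exact_mod_cast mem_range.mp hj)
    refine ((hasFDerivAt_iteratedFDeriv_apply_sub_const hAj z y).const_mul
      (1 / ((j + 1)! : ℝ))).congr_fderiv ?_
    rw [smul_smul, Nat.factorial_succ]
    push_cast
    field_simp
  have htaylor : taylorApprox p A z = fun y ↦
      (∑ j ∈ range p, 1 / ((j + 1)! : ℝ) * iteratedFDeriv ℝ (j + 1) A z (fun _ ↦ y - z)) + A z := by
    ext y
    simp [taylorApprox, sum_range_succ']
  rw [htaylor]
  exact (HasFDerivAt.fun_sum hterm).add_const (A z)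

theorem sum_taylor_fderiv_eq_of_isMinOn (hp : 1 ≤ p) (hA : ContDiff ℝ p A)
    (hy : IsMinOn (regularizedTaylorModel p M A x) univ y) :
    ∑ j ∈ range p, (j ! : ℝ)⁻¹ • iteratedFDeriv ℝ j (fderiv ℝ A) x (fun _ ↦ y - x) =
      -((M / (p - 1)! * ‖y - x‖ ^ (p - 1)) • innerSL ℝ (y - x)) := by
  obtain ⟨n, rfl⟩ : ∃ n, p = n + 1 := ⟨p - 1, by omega⟩
  have hderiv := (hasFDerivAt_taylorApprox hA x y).add
    ((hasFDerivAt_norm_sub_pow n x y).const_mul ((n + 1 : ℕ) * M / ((n + 1 + 1)! : ℝ)))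
  have hzero := (hy.isLocalMin Filter.univ_mem).hasFDerivAt_eq_zero hderiv
  rw [eq_neg_of_add_eq_zero_left hzero, smul_smul, Nat.add_sub_cancel, Nat.factorial_succ,
    Nat.factorial_succ]
  congr 2
  push_cast
  field_simp
  ring

theorem norm_gradient_add_smul_le (hp : 2 ≤ p) (hA : ContDiff ℝ p A)
    (hLip : ∀ u v, ‖iteratedFDeriv ℝ p A u - iteratedFDeriv ℝ p A v‖ ≤ L * ‖u - v‖)
    (hy : IsMinOn (regularizedTaylorModel p M A x) univ y) :
    ‖gradient A y + (M / (p - 1)! * ‖y - x‖ ^ (p - 1)) • (y - x)‖ ≤ L * ‖y - x‖ ^ p / p ! := by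
  obtain ⟨n, rfl⟩ : ∃ n, p = n + 2 := ⟨p - 2, by omega⟩
  have hrem := norm_sub_taylor_le_of_lipschitz (hA.fderiv_right (m := n + 1) le_rfl)
    (fun u v ↦ (norm_iteratedFDeriv_fderiv_sub A (n + 1) u v).trans_le (hLip u v)) x (y - x)
  rw [add_sub_cancel, sum_taylor_fderiv_eq_of_isMinOn (by omega) hA hy, sub_neg_eq_add] at hrem
  have hdual : (InnerProductSpace.toDual ℝ _).symm (innerSL ℝ (y - x)) = y - x :=
    (InnerProductSpace.toDual ℝ _).symm_apply_eq.mpr (by ext; simp)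
  have hgrad : gradient A y + (M / (n + 2 - 1)! * ‖y - x‖ ^ (n + 2 - 1)) • (y - x) =
      (InnerProductSpace.toDual ℝ _).symm
        (fderiv ℝ A y + (M / (n + 2 - 1)! * ‖y - x‖ ^ (n + 2 - 1)) • innerSL ℝ (y - x)) := by
    rw [map_add, map_smul, hdual]
    rfl
  rwa [hgrad, LinearIsometryEquiv.norm_map]

theorem norm_gradient_le_of_isMinOn (hp : 2 ≤ p) (hA : ContDiff ℝ p A)
    (hLip : ∀ u v, ‖iteratedFDeriv ℝ p A u - iteratedFDeriv ℝ p A v‖ ≤ L * ‖u - v‖)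
    (hM : 0 ≤ M) (hy : IsMinOn (regularizedTaylorModel p M A x) univ y) :
    ‖gradient A y‖ ≤ (p * M + L) / p ! * ‖y - x‖ ^ p := by
  set c := M / (p - 1)! * ‖y - x‖ ^ (p - 1)
  have hc : ‖c • (y - x)‖ = p * M / p ! * ‖y - x‖ ^ p := by
    obtain ⟨n, rfl⟩ : ∃ n, p = n + 1 := ⟨p - 1, by omega⟩
    rw [norm_smul, Real.norm_of_nonneg (by positivity)]
    simp only [c, Nat.add_sub_cancel, Nat.factorial_succ, pow_succ]
    push_cast
    field_simp
  calc ‖gradient A y‖ ≤ ‖gradient A y + c • (y - x)‖ + ‖c • (y - x)‖ := norm_le_add_norm_add _ _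
    _ ≤ L * ‖y - x‖ ^ p / p ! + p * M / p ! * ‖y - x‖ ^ p := by
        rw [hc]
        gcongr
        exact norm_gradient_add_smul_le hp hA hLip hy
    _ = (p * M + L) / p ! * ‖y - x‖ ^ p := by ring

theorem norm_extragradient_sub_le (hp : 2 ≤ p) (hA : ContDiff ℝ p A)
    (hLip : ∀ u v, ‖iteratedFDeriv ℝ p A u - iteratedFDeriv ℝ p A v‖ ≤ L * ‖u - v‖)
    (hM : 0 < M) (hy : IsMinOn (regularizedTaylorModel p M A x) univ y) :
    ‖x - (M / (p - 1)! * ‖y - x‖ ^ (p - 1))⁻¹ • gradient A y - y‖ ≤ L / (p * M) * ‖y - x‖ := by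
  set c := M / (p - 1)! * ‖y - x‖ ^ (p - 1)
  have h := norm_gradient_add_smul_le hp hA hLip hy
  rcases eq_or_ne y x with rfl | hyx
  · have hg : gradient A y = 0 := by simpa [show p ≠ 0 by omega] using h
    simp [hg]
  have hr : 0 < ‖y - x‖ := norm_pos_iff.mpr (sub_ne_zero.mpr hyx)
  have hc : 0 < c := by positivity
  have hstep : x - c⁻¹ • gradient A y - y = -(c⁻¹ • (gradient A y + c • (y - x))) := by
    rw [smul_add, smul_smul, inv_mul_cancel₀ hc.ne', one_smul]
    abel
  rw [hstep, norm_neg, norm_smul, Real.norm_of_nonneg (inv_nonneg.mpr hc.le)]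
  calc c⁻¹ * ‖gradient A y + c • (y - x)‖ ≤ c⁻¹ * (L * ‖y - x‖ ^ p / p !) := by gcongr
    _ = L / (p * M) * ‖y - x‖ := by
        obtain ⟨n, rfl⟩ : ∃ n, p = n + 1 := ⟨p - 1, by omega⟩
        simp only [c, Nat.add_sub_cancel, Nat.factorial_succ, pow_succ]
        push_cast
        field_simp

theorem norm_sub_sq_le_of_extragradient_step (hp : 2 ≤ p) (hA : ContDiff ℝ p A)
    (hconv : ConvexOn ℝ univ A)
    (hLip : ∀ u v, ‖iteratedFDeriv ℝ p A u - iteratedFDeriv ℝ p A v‖ ≤ L * ‖u - v‖)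
    (hM : 0 < M) {z x' : EuclideanSpace ℝ (Fin d)} (hz : IsMinOn A univ z)
    (hy : IsMinOn (regularizedTaylorModel p M A x) univ y)
    (hx' : x' = x - (M / (p - 1)! * ‖y - x‖ ^ (p - 1))⁻¹ • gradient A y) :
    ‖x' - z‖ ^ 2 ≤ ‖x - z‖ ^ 2 - (1 - (L / (p * M)) ^ 2) * ‖y - x‖ ^ 2 := by
  subst hx'
  refine norm_sub_sq_le_of_inner_nonneg (norm_extragradient_sub_le hp hA hLip hM hy) ?_
  rw [sub_sub_cancel, real_inner_smul_left]
  have hAy : DifferentiableAt ℝ A y := (hA.differentiable (by simp; omega)).differentiableAt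
  exact mul_nonneg (by positivity) (hconv.inner_gradient_sub_nonneg hAy hz)

end TensorStep

theorem exists_lt_mul_le_of_le_sub {D s : ℕ → ℝ} {κ : ℝ} {T : ℕ} (hT : 0 < T)
    (hD : ∀ t < T, D (t + 1) ≤ D t - κ * s t) (hDT : 0 ≤ D T) :
    ∃ t < T, κ * T * s t ≤ D 0 := by
  have hsum : ∑ t ∈ range T, κ * s t ≤ D 0 :=
    calc ∑ t ∈ range T, κ * s t ≤ ∑ t ∈ range T, (D t - D (t + 1)) :=
          sum_le_sum fun t ht ↦ by linarith [hD t (mem_range.mp ht)]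
      _ = D 0 - D T := sum_range_sub' D T
      _ ≤ D 0 := by linarith
  obtain ⟨t, ht, hle⟩ := exists_le_of_sum_le (nonempty_range_iff.mpr hT.ne')
    (f := fun t ↦ T * (κ * s t)) (g := fun _ ↦ D 0)
    (by rw [← mul_sum, sum_const, card_range, nsmul_eq_mul]; gcongr)
  exact ⟨t, mem_range.mp ht, by linarith⟩

theorem le_rate_of_mul_sq_le {p : ℕ} {L M T r R G : ℝ} (hL : 0 ≤ L) (hLM : L < p * M)
    (hT : 0 < T) (hr : 0 ≤ r) (hR : 0 ≤ R) (hG : G ≤ (p * M + L) / p ! * r ^ p)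
    (hr2 : (1 - (L / (p * M)) ^ 2) * T * r ^ 2 ≤ R ^ 2) :
    G ≤ (p : ℝ) ^ p * M ^ p / (p ! * (p * M - L) ^ ((p : ℝ) / 2) *
      (p * M + L) ^ ((p : ℝ) / 2 - 1)) * R ^ p / T ^ ((p : ℝ) / 2) := by
  set S := (p : ℝ) * M
  have hS : 0 < S := hL.trans_lt hLM
  have hSL : 0 < S - L := sub_pos.mpr hLM
  have hSL' : 0 < S + L := by linarith
  have hsq_rpow : ∀ a : ℝ, 0 ≤ a → (a ^ 2) ^ ((p : ℝ) / 2) = a ^ p := fun a ha ↦ by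
    rw [← Real.rpow_natCast_mul ha, Nat.cast_ofNat, mul_div_cancel₀ _ two_ne_zero,
      Real.rpow_natCast]
  have hr2' : r ^ 2 ≤ (S * R) ^ 2 / ((S - L) * (S + L) * T) := by
    rw [le_div_iff₀ (by positivity)]
    have : 1 - (L / S) ^ 2 = (S - L) * (S + L) / S ^ 2 := by field_simp; ring
    rw [this] at hr2
    rw [div_mul_eq_mul_div, div_mul_eq_mul_div, div_le_iff₀ (by positivity)] at hr2
    nlinarith
  have hrp : r ^ p ≤ (S * R) ^ p / ((S - L) ^ ((p : ℝ) / 2) * (S + L) ^ ((p : ℝ) / 2) *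
      T ^ ((p : ℝ) / 2)) := by
    rw [← hsq_rpow r hr, ← hsq_rpow (S * R) (by positivity), ← Real.mul_rpow hSL.le hSL'.le,
      ← Real.mul_rpow (by positivity) hT.le, ← Real.div_rpow (by positivity) (by positivity)]
    exact Real.rpow_le_rpow (by positivity) hr2' (by positivity)
  calc G ≤ (S + L) / p ! * r ^ p := hG
    _ ≤ (S + L) / p ! * ((S * R) ^ p / ((S - L) ^ ((p : ℝ) / 2) * (S + L) ^ ((p : ℝ) / 2) *
          T ^ ((p : ℝ) / 2))) := by gcongr
    _ = _ := by
        rw [Real.rpow_sub_one hSL'.ne', mul_pow, mul_pow]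
        have : 0 < (S - L) ^ ((p : ℝ) / 2) := Real.rpow_pos_of_pos hSL _
        have : 0 < (S + L) ^ ((p : ℝ) / 2) := Real.rpow_pos_of_pos hSL' _
        have : 0 < T ^ ((p : ℝ) / 2) := Real.rpow_pos_of_pos hT _
        field_simp

theorem tensor_extragradient_rate {d : ℕ} (p : ℕ) (hp : 2 ≤ p)
    (A : EuclideanSpace ℝ (Fin d) → ℝ)
    (hA : ContDiff ℝ (p : ℕ∞) A) (hconv : ConvexOn ℝ Set.univ A)
    (L M : ℝ) (hL : 0 < L)
    (hLip : ∀ x y : EuclideanSpace ℝ (Fin d),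
      ‖iteratedFDeriv ℝ p A x - iteratedFDeriv ℝ p A y‖ ≤ L * ‖x - y‖)
    (hM : L ≤ M)
    (xs : EuclideanSpace ℝ (Fin d)) (hmin : IsMinOn A Set.univ xs)
    (T : ℕ) (hT : 1 ≤ T)
    (x xhalf : ℕ → EuclideanSpace ℝ (Fin d))
    (hhalf : ∀ t < T, IsMinOn (fun y => taylorApprox p A (x t) y +
      ((p : ℝ) * M / (Nat.factorial (p + 1) : ℝ)) * ‖y - x t‖ ^ (p + 1)) Set.univ (xhalf t))
    (hstep : ∀ t < T, x (t + 1) = x t -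
      (((M / (Nat.factorial (p - 1) : ℝ)) * ‖xhalf t - x t‖ ^ (p - 1))⁻¹) •
        gradient A (xhalf t)) :
    ∃ t < T, ‖gradient A (xhalf t)‖ ≤
      ((p : ℝ) ^ p * M ^ p /
          ((Nat.factorial p : ℝ) * ((p : ℝ) * M - L) ^ ((p : ℝ) / 2) *
            ((p : ℝ) * M + L) ^ ((p : ℝ) / 2 - 1))) *
        ‖x 0 - xs‖ ^ p / (T : ℝ) ^ ((p : ℝ) / 2) := by
  have hM₀ : 0 < M := hL.trans_le hM
  have hLM : L < p * M := by
    have : (2 : ℝ) ≤ p := by exact_mod_cast hp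
    nlinarith
  obtain ⟨t, ht, hdescent⟩ := exists_lt_mul_le_of_le_sub (D := fun t ↦ ‖x t - xs‖ ^ 2)
    (s := fun t ↦ ‖xhalf t - x t‖ ^ 2) (by omega)
    (fun t ht ↦ norm_sub_sq_le_of_extragradient_step hp hA hconv hLip hM₀ hmin (hhalf t ht)
      (hstep t ht)) (by positivity)
  exact ⟨t, ht, le_rate_of_mul_sq_le hL.le hLM (by positivity) (norm_nonneg _) (norm_nonneg _)
    (norm_gradient_le_of_isMinOn hp hA hLip hM₀.le (hhalf t ht)) hdescent⟩
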